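/- Let H be a symmetric d×d matrix with λ_min(H) < 0, σ > 0, ν ∈ (0,1], and u a unit vector with ⟨u, Hu⟩ ≤ ν λ_min(H). Let s^E = α^E u where α^E minimizes m(α u) = α⟨g,u⟩ + (α²/2)⟨u,Hu⟩ + (σ/3)|α|³ over α ∈ ℝ (and w.l.o.g. ⟨g, s^E⟩ ≤ 0). Then σ‖s^E‖ ≥ ν|λ_min(H)| and −m(s^E) ≥ (ν|λ_min(H)|/6) ‖s^E‖². -/

import Mathlib

open scoped RealInnerProductSpace

/-!
Write `N = ‖s^E‖`. Since `⟪u, H u⟫ < 0`, the model is negative at `±t u` for one sign and small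
`t > 0`, so the line minimizer `s^E` is nonzero. Stationarity with `⟪g, s^E⟫ ≤ 0` gives
`σ N³ ≥ -⟪s^E, H s^E⟫ ≥ ν |λ_min| N²`, i.e. `σ N ≥ ν |λ_min|`, and at a stationary point
`m(s) = ⟪g, s⟫ / 2 - σ ‖s‖³ / 6 ≤ -σ N³ / 6`.
-/

noncomputable section

variable {E : Type*} [NormedAddCommGroup E] [InnerProductSpace ℝ E]

def cubicModel (g : E) (H : E →L[ℝ] E) (σ : ℝ) (s : E) : ℝ :=
  ⟪g, s⟫ + (1/2) * ⟪s, H s⟫ + (σ/3) * ‖s‖^3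

variable (g : E) (H : E →L[ℝ] E) {σ : ℝ}

@[simp]
theorem cubicModel_zero : cubicModel g H σ 0 = 0 := by
  simp [cubicModel]

theorem cubicModel_add_cubicModel_neg (v : E) :
    cubicModel g H σ v + cubicModel g H σ (-v) = ⟪v, H v⟫ + (2 * σ / 3) * ‖v‖^3 := by
  simp only [cubicModel, map_neg, inner_neg_right, inner_neg_left, neg_neg, norm_neg]
  ring

theorem exists_cubicModel_smul_neg (hσ : 0 < σ) {v : E} (hv : ⟪v, H v⟫ < 0) :
    ∃ α : ℝ, cubicModel g H σ (α • v) < 0 := by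
  have hv0 : v ≠ 0 := by rintro rfl; simp at hv
  -- at `t = -⟪v, H v⟫ / (σ ‖v‖³)` the cubic term cancels two thirds of the quadratic one
  set t := -⟪v, H v⟫ / (σ * ‖v‖^3) with ht
  have ht0 : 0 < t := div_pos (neg_pos.mpr hv) (by positivity)
  have hsum : cubicModel g H σ (t • v) + cubicModel g H σ ((-t) • v) < 0 := by
    rw [neg_smul, cubicModel_add_cubicModel_neg, map_smul, real_inner_smul_left,
      real_inner_smul_right, norm_smul, Real.norm_of_nonneg ht0.le]
    have hσt : σ * t * ‖v‖^3 = -⟪v, H v⟫ := by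
      rw [ht]; field_simp
    have : t * (t * ⟪v, H v⟫) + 2 * σ / 3 * (t * ‖v‖)^3 = t^2 * ⟪v, H v⟫ / 3 := by
      linear_combination (2 / 3 * t^2) * hσt
    rw [this]
    exact div_neg_of_neg_of_pos (mul_neg_of_pos_of_neg (by positivity) hv) (by norm_num)
  by_contra! h
  linarith [h t, h (-t)]

theorem inner_smul_map_smul_le {u : E} {μ : ℝ} (h : ⟪u, H u⟫ ≤ μ * ‖u‖^2) (α : ℝ) :
    ⟪α • u, H (α • u)⟫ ≤ μ * ‖α • u‖^2 := by
  calc ⟪α • u, H (α • u)⟫ = α^2 * ⟪u, H u⟫ := by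
        rw [map_smul, real_inner_smul_left, real_inner_smul_right]; ring
    _ ≤ α^2 * (μ * ‖u‖^2) := mul_le_mul_of_nonneg_left h (sq_nonneg α)
    _ = μ * ‖α • u‖^2 := by rw [norm_smul, Real.norm_eq_abs, mul_pow, sq_abs]; ring

variable {s : E}

theorem cubicModel_eq_of_stationary (hstat : ⟪g, s⟫ + ⟪s, H s⟫ + σ * ‖s‖^3 = 0) :
    cubicModel g H σ s = ⟪g, s⟫ / 2 - σ / 6 * ‖s‖^3 := by
  unfold cubicModel
  linear_combination (1/2 : ℝ) * hstat

theorem le_mul_norm_of_stationary {κ : ℝ} (hs : s ≠ 0)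
    (hstat : ⟪g, s⟫ + ⟪s, H s⟫ + σ * ‖s‖^3 = 0) (hgs : ⟪g, s⟫ ≤ 0)
    (hcurv : ⟪s, H s⟫ ≤ -κ * ‖s‖^2) :
    κ ≤ σ * ‖s‖ := by
  refine le_of_mul_le_mul_right ?_ (pow_pos (norm_pos_iff.mpr hs) 2)
  linear_combination hcurv + hgs - hstat

theorem neg_cubicModel_ge_of_stationary {κ : ℝ} (hstat : ⟪g, s⟫ + ⟪s, H s⟫ + σ * ‖s‖^3 = 0)
    (hgs : ⟪g, s⟫ ≤ 0) (hκ : κ ≤ σ * ‖s‖) :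
    κ / 6 * ‖s‖^2 ≤ -cubicModel g H σ s := by
  rw [cubicModel_eq_of_stationary g H hstat]
  have : κ * ‖s‖^2 ≤ σ * ‖s‖ * ‖s‖^2 := mul_le_mul_of_nonneg_right hκ (by positivity)
  linear_combination this / 6 + hgs / 2

end

theorem cubic_eigen_descent_general
    {d : ℕ} (g : EuclideanSpace ℝ (Fin d))
    (H : EuclideanSpace ℝ (Fin d) →L[ℝ] EuclideanSpace ℝ (Fin d))
    (σ ν lamMin : ℝ) (hσ : 0 < σ) (hν : ν ∈ Set.Ioc (0:ℝ) 1)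
    (hlam_neg : lamMin < 0)
    (u : EuclideanSpace ℝ (Fin d)) (hu : ‖u‖ = 1)
    (hcurv : ⟪u, H u⟫ ≤ ν * lamMin)
    (m : EuclideanSpace ℝ (Fin d) → ℝ)
    (hm : ∀ t, m t = ⟪g, t⟫ + (1/2) * ⟪t, H t⟫ + (σ/3) * ‖t‖^3)
    (αE : ℝ) (sE : EuclideanSpace ℝ (Fin d)) (hsE : sE = αE • u)
    (hmin : ∀ α : ℝ, m sE ≤ m (α • u))
    (hgsE : ⟪g, sE⟫ ≤ 0)
    (hstat : ⟪g, sE⟫ + ⟪sE, H sE⟫ + σ * ‖sE‖^3 = 0) :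
    σ * ‖sE‖ ≥ ν * |lamMin| ∧ -m sE ≥ (ν * |lamMin| / 6) * ‖sE‖^2 := by
  have hm' : m = cubicModel g H σ := funext hm
  subst hm'
  have hu_neg : ⟪u, H u⟫ < 0 := hcurv.trans_lt (mul_neg_of_pos_of_neg hν.1 hlam_neg)
  have hsE0 : sE ≠ 0 := by
    obtain ⟨α, hα⟩ := exists_cubicModel_smul_neg g H hσ hu_neg
    rintro rfl
    linarith [hmin α, cubicModel_zero g H (σ := σ)]
  have hcurvE : ⟪sE, H sE⟫ ≤ -(ν * |lamMin|) * ‖sE‖^2 := by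
    rw [abs_of_neg hlam_neg, mul_neg, neg_neg, hsE]
    exact inner_smul_map_smul_le H (by rwa [hu, one_pow, mul_one]) αE
  have hgrowth := le_mul_norm_of_stationary g H hsE0 hstat hgsE hcurvE
  exact ⟨hgrowth, neg_cubicModel_ge_of_stationary g H hstat hgsE hgrowth⟩

/-- Eigen point descent for the cubic model: `σ‖s^E‖ ≥ ν|λ_min(H)|` and
`−m(s^E) ≥ (ν|λ_min(H)|/6)‖s^E‖²`. -/
theorem cubic_eigen_descent
    {d : ℕ} (g : EuclideanSpace ℝ (Fin d))
    (H : EuclideanSpace ℝ (Fin d) →L[ℝ] EuclideanSpace ℝ (Fin d))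
    (hHsym : ∀ u v, ⟪H u, v⟫ = ⟪u, H v⟫)
    (σ ν lamMin : ℝ) (hσ : 0 < σ) (hν : ν ∈ Set.Ioc (0:ℝ) 1)
    (hlam_attained : ∃ v, ‖v‖ = 1 ∧ ⟪v, H v⟫ = lamMin)
    (hlam_lb : ∀ v : EuclideanSpace ℝ (Fin d), ‖v‖ = 1 → lamMin ≤ ⟪v, H v⟫)
    (hlam_neg : lamMin < 0)
    (u : EuclideanSpace ℝ (Fin d)) (hu : ‖u‖ = 1)
    (hcurv : ⟪u, H u⟫ ≤ ν * lamMin)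
    (m : EuclideanSpace ℝ (Fin d) → ℝ)
    (hm : ∀ t, m t = ⟪g, t⟫ + (1/2) * ⟪t, H t⟫ + (σ/3) * ‖t‖^3)
    (αE : ℝ) (sE : EuclideanSpace ℝ (Fin d)) (hsE : sE = αE • u)
    (hmin : ∀ α : ℝ, m sE ≤ m (α • u))
    (hgsE : ⟪g, sE⟫ ≤ 0)
    (hstat : ⟪g, sE⟫ + ⟪sE, H sE⟫ + σ * ‖sE‖^3 = 0) :
    σ * ‖sE‖ ≥ ν * |lamMin| ∧ -m sE ≥ (ν * |lamMin| / 6) * ‖sE‖^2 :=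
  cubic_eigen_descent_general g H σ ν lamMin hσ hν hlam_neg u hu hcurv m hm αE sE hsE hmin hgsE
    hstat
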